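/- arXiv:0811.2650 — 4 statements merged into one kernel-verified Lean document; each statement's English description precedes it below -/
import Mathlib

section
/- If every injective right R-module has finite flat dimension, then every Gorenstein projective left R-module is Gorenstein flat; consequently Gfd_R(M) ≤ Gpd_R(M) for every left R-module M. -/
open CategoryTheory

universe u

variable (R : Type u) [CommRing R]

/-- A (doubly infinite) complex of `R`-modules, as a `ℤ`-indexed family of modules
with differentials of degree `+1`. -/
structure ModuleComplex where
  X : ℤ → Type u
  [acg : ∀ n, AddCommGroup (X n)]
  [mod : ∀ n, Module R (X n)]
  d : ∀ n : ℤ, X n →ₗ[R] X (n + 1)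
  comp_eq_zero : ∀ n : ℤ, (d (n + 1)).comp (d n) = 0

attribute [instance] ModuleComplex.acg ModuleComplex.mod

namespace ModuleComplex

variable {R}

/-- The complex is exact. -/
def Exact (C : ModuleComplex R) : Prop :=
  ∀ n : ℤ, LinearMap.range (C.d n) = LinearMap.ker (C.d (n + 1))

/-- The complex `I ⊗_R C` is exact. -/
def TensorExact (C : ModuleComplex R) (I : Type u) [AddCommGroup I] [Module R I] : Prop :=
  ∀ n : ℤ, LinearMap.range (LinearMap.lTensor I (C.d n))
    = LinearMap.ker (LinearMap.lTensor I (C.d (n + 1)))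

/-- The complex `Hom_R(C, Q)` is exact. -/
def HomExact (C : ModuleComplex R) (Q : Type u) [AddCommGroup Q] [Module R Q] : Prop :=
  ∀ (n : ℤ) (f : C.X (n + 1) →ₗ[R] Q), f.comp (C.d n) = 0 →
    ∃ g : C.X (n + 1 + 1) →ₗ[R] Q, g.comp (C.d (n + 1)) = f

end ModuleComplex

/-- A complete flat resolution: an exact complex of flat modules that remains exact
after tensoring with any injective module. -/
def IsCompleteFlatResolution (C : ModuleComplex R) : Prop :=
  (∀ n, Module.Flat R (C.X n)) ∧ C.Exact ∧
    ∀ (I : Type u) [AddCommGroup I] [Module R I], Module.Injective R I → C.TensorExact I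

/-- A complete projective resolution: an exact complex of projective modules such that
`Hom_R(-, Q)` leaves it exact for every projective module `Q`. -/
def IsCompleteProjectiveResolution (C : ModuleComplex R) : Prop :=
  (∀ n, Module.Projective R (C.X n)) ∧ C.Exact ∧
    ∀ (Q : Type u) [AddCommGroup Q] [Module R Q], Module.Projective R Q → C.HomExact Q

/-- A Gorenstein flat module: a cokernel of a middle map of a complete flat resolution. -/
def IsGorensteinFlat (M : Type u) [AddCommGroup M] [Module R M] : Prop :=
  ∃ C : ModuleComplex R, IsCompleteFlatResolution R C ∧
    Nonempty (M ≃ₗ[R] LinearMap.range (C.d 0))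

/-- A Gorenstein projective module. -/
def IsGorensteinProjective (M : Type u) [AddCommGroup M] [Module R M] : Prop :=
  ∃ C : ModuleComplex R, IsCompleteProjectiveResolution R C ∧
    Nonempty (M ≃ₗ[R] LinearMap.range (C.d 0))

/-- `ResDimLE P n M` : `M` admits a length-`n` left resolution by modules satisfying `P`. -/
def ResDimLE (P : ∀ (N : Type u) [AddCommGroup N] [Module R N], Prop) :
    ℕ → ∀ (M : Type u) [AddCommGroup M] [Module R M], Prop :=
  Nat.rec (motive := fun _ => ∀ (M : Type u) [AddCommGroup M] [Module R M], Prop)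
    (fun M _ _ => P M)
    (fun _ ih M _ _ => ∃ (G : Type u) (_ : AddCommGroup G) (_ : Module R G)
      (f : G →ₗ[R] M), P G ∧ Function.Surjective f ∧ ih (LinearMap.ker f))

/-- `CoresDimLE P n M` : `M` admits a length-`n` right resolution by modules satisfying `P`. -/
def CoresDimLE (P : ∀ (N : Type u) [AddCommGroup N] [Module R N], Prop) :
    ℕ → ∀ (M : Type u) [AddCommGroup M] [Module R M], Prop :=
  Nat.rec (motive := fun _ => ∀ (M : Type u) [AddCommGroup M] [Module R M], Prop)
    (fun M _ _ => P M)
    (fun _ ih M _ _ => ∃ (I : Type u) (_ : AddCommGroup I) (_ : Module R I)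
      (f : M →ₗ[R] I), P I ∧ Function.Injective f ∧ ih (I ⧸ LinearMap.range f))

/-- Flat dimension. -/
noncomputable def flatDim (M : Type u) [AddCommGroup M] [Module R M] : ℕ∞ :=
  sInf {n : ℕ∞ | ∃ m : ℕ, n = m ∧ ResDimLE R (fun N _ _ => Module.Flat R N) m M}

/-- Injective dimension. -/
noncomputable def injDim (M : Type u) [AddCommGroup M] [Module R M] : ℕ∞ :=
  sInf {n : ℕ∞ | ∃ m : ℕ, n = m ∧ CoresDimLE R (fun N _ _ => Module.Injective R N) m M}

/-- Gorenstein flat dimension. -/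
noncomputable def gorensteinFlatDim (M : Type u) [AddCommGroup M] [Module R M] : ℕ∞ :=
  sInf {n : ℕ∞ | ∃ m : ℕ, n = m ∧ ResDimLE R (fun N _ _ => IsGorensteinFlat R N) m M}

/-- Gorenstein projective dimension. -/
noncomputable def gorensteinProjDim (M : Type u) [AddCommGroup M] [Module R M] : ℕ∞ :=
  sInf {n : ℕ∞ | ∃ m : ℕ, n = m ∧ ResDimLE R (fun N _ _ => IsGorensteinProjective R N) m M}

/-- `Tor_n^R(N, M)` as a module. -/
noncomputable def TorMod (n : ℕ) (N M : Type u) [AddCommGroup N] [Module R N]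
    [AddCommGroup M] [Module R M] : ModuleCat.{u} R :=
  ((Tor (ModuleCat.{u} R) n).obj (ModuleCat.of R N)).obj (ModuleCat.of R M)

/-- The copure flat dimension: the largest `n` with `Tor_n(E, M) ≠ 0`
for some injective module `E`. -/
noncomputable def copureFlatDim (M : Type u) [AddCommGroup M] [Module R M] : ℕ∞ :=
  sSup {n : ℕ∞ | ∃ m : ℕ, n = m ∧ ∃ (E : Type u) (_ : AddCommGroup E) (_ : Module R E),
    Module.Injective R E ∧ Nontrivial (TorMod R m E M)}

/-- `Ext^n_R(M, N)` as a module. -/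
noncomputable def ExtMod (n : ℕ) (M N : Type u) [AddCommGroup M] [Module R M]
    [AddCommGroup N] [Module R N] : ModuleCat.{u} R :=
  ((Ext R (ModuleCat.{u} R) n).obj (Opposite.op (ModuleCat.of R M))).obj (ModuleCat.of R N)

/-- `M` is infinitely presented: it admits a resolution by finitely generated
free modules. -/
def InfinitelyPresented (M : Type u) [AddCommGroup M] [Module R M] : Prop :=
  ∃ (F : ℕ → ModuleCat.{u} R) (d : ∀ n, F (n + 1) →ₗ[R] F n) (ε : (F 0 : Type u) →ₗ[R] M),
    (∀ n, Module.Free R (F n) ∧ Module.Finite R (F n)) ∧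
    Function.Surjective ε ∧ LinearMap.ker ε = LinearMap.range (d 0) ∧
    ∀ n, LinearMap.ker (d n) = LinearMap.range (d (n + 1))

/-!
The complete projective resolution `C` of a Gorenstein projective module consists of flat
modules, so it only remains to see that `I ⊗ C` is exact for every injective `I`. This holds
for flat `I`, and it passes from `K` and `F` to `I` along any `0 → K → F → I → 0`: as `C` is
degreewise flat, `0 → K ⊗ C → F ⊗ C → I ⊗ C → 0` is a short exact sequence of complexes, and
its long exact sequence gives exactness of `I ⊗ C`. Induction on the length of a flat resolution
of `I` concludes. A Gorenstein projective resolution is then also a Gorenstein flat one, which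
gives `Gfd ≤ Gpd`.
-/

open scoped TensorProduct

theorem LinearMap.lTensor_rTensor_comm {S A B M N : Type*} [CommSemiring S]
    [AddCommMonoid A] [Module S A] [AddCommMonoid B] [Module S B]
    [AddCommMonoid M] [Module S M] [AddCommMonoid N] [Module S N]
    (g : A →ₗ[S] B) (h : M →ₗ[S] N) (a : A ⊗[S] M) :
    h.lTensor B (g.rTensor M a) = g.rTensor N (h.lTensor A a) := by
  rw [← LinearMap.comp_apply, lTensor_comp_rTensor, ← rTensor_comp_lTensor, LinearMap.comp_apply]

namespace ModuleComplex

variable {R} {C : ModuleComplex R}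

theorem lTensor_d_comp_d (C : ModuleComplex R) (I : Type u) [AddCommGroup I] [Module R I]
    (n : ℤ) : ((C.d (n + 1)).lTensor I).comp ((C.d n).lTensor I) = 0 := by
  rw [← LinearMap.lTensor_comp, C.comp_eq_zero n, LinearMap.lTensor_zero]

theorem Exact.tensorExact_of_flat (hC : C.Exact) (I : Type u) [AddCommGroup I] [Module R I]
    [Module.Flat R I] : C.TensorExact I := fun n =>
  (LinearMap.exact_iff.mp (Module.Flat.lTensor_exact I (LinearMap.exact_iff.mpr (hC n).symm))).symm

theorem tensorExact_of_surjective (hflat : ∀ n, Module.Flat R (C.X n))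
    {F I : Type u} [AddCommGroup F] [Module R F] [AddCommGroup I] [Module R I]
    {f : F →ₗ[R] I} (hf : Function.Surjective f)
    (hF : C.TensorExact F) (hK : C.TensorExact (LinearMap.ker f)) : C.TensorExact I := by
  set j := (LinearMap.ker f).subtype
  have hjf (k : ℤ) : Function.Exact (j.rTensor (C.X k)) (f.rTensor (C.X k)) :=
    have := hflat k
    Module.Flat.rTensor_exact (C.X k) (LinearMap.exact_subtype_ker_map f)
  have hj (k : ℤ) : Function.Injective (j.rTensor (C.X k)) :=
    have := hflat k
    Module.Flat.rTensor_preserves_injective_linearMap j (LinearMap.ker f).injective_subtype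
  intro n
  refine le_antisymm (LinearMap.range_le_ker_iff.mpr (C.lTensor_d_comp_d I n)) fun x hx => ?_
  obtain ⟨y, rfl⟩ := LinearMap.rTensor_surjective (C.X (n + 1)) hf x
  obtain ⟨z, hz⟩ := (hjf (n + 1 + 1) _).mp <| by
    rwa [LinearMap.mem_ker, LinearMap.lTensor_rTensor_comm] at hx
  have hz_cycle : z ∈ LinearMap.ker ((C.d (n + 1 + 1)).lTensor (LinearMap.ker f)) := by
    refine hj _ ?_
    rw [map_zero, ← LinearMap.lTensor_rTensor_comm, hz]
    exact LinearMap.congr_fun (C.lTensor_d_comp_d F (n + 1)) y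
  obtain ⟨w, hw⟩ := (hK (n + 1)).ge hz_cycle
  have hy_cycle : y - j.rTensor _ w ∈ LinearMap.ker ((C.d (n + 1)).lTensor F) := by
    rw [LinearMap.mem_ker, map_sub, LinearMap.lTensor_rTensor_comm, hw, hz, sub_self]
  obtain ⟨u, hu⟩ := (hF n).ge hy_cycle
  refine ⟨f.rTensor (C.X n) u, ?_⟩
  rw [LinearMap.lTensor_rTensor_comm, hu, map_sub, (hjf _).apply_apply_eq_zero, sub_zero]

theorem Exact.tensorExact_of_resDimLE_flat (hC : C.Exact) (hflat : ∀ n, Module.Flat R (C.X n))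
    {m : ℕ} {I : Type u} [AddCommGroup I] [Module R I]
    (hI : ResDimLE R (fun N _ _ => Module.Flat R N) m I) : C.TensorExact I := by
  induction m generalizing I with
  | zero =>
    have : Module.Flat R I := hI
    exact hC.tensorExact_of_flat I
  | succ m ih =>
    obtain ⟨F, _, _, f, hF, hf, hK⟩ := hI
    exact tensorExact_of_surjective hflat hf (hC.tensorExact_of_flat F) (ih hK)

end ModuleComplex

section

variable {R}

theorem exists_resDimLE_of_flatDim_ne_top {M : Type u} [AddCommGroup M] [Module R M]
    (hM : flatDim R M ≠ ⊤) : ∃ m : ℕ, ResDimLE R (fun N _ _ => Module.Flat R N) m M := by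
  by_contra! hne
  refine hM (sInf_eq_top.mpr ?_)
  rintro _ ⟨m, -, hm⟩
  exact absurd hm (hne m)

theorem isCompleteFlatResolution_of_exact
    (h : ∀ (I : Type u) [AddCommGroup I] [Module R I], Module.Injective R I → flatDim R I ≠ ⊤)
    {C : ModuleComplex R} (hflat : ∀ n, Module.Flat R (C.X n)) (hC : C.Exact) :
    IsCompleteFlatResolution R C := by
  refine ⟨hflat, hC, fun I _ _ hI => ?_⟩
  obtain ⟨m, hm⟩ := exists_resDimLE_of_flatDim_ne_top (h I hI)
  exact hC.tensorExact_of_resDimLE_flat hflat hm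

theorem IsGorensteinProjective.isGorensteinFlat
    (h : ∀ (I : Type u) [AddCommGroup I] [Module R I], Module.Injective R I → flatDim R I ≠ ⊤)
    {M : Type u} [AddCommGroup M] [Module R M] (hM : IsGorensteinProjective R M) :
    IsGorensteinFlat R M := by
  obtain ⟨C, ⟨hproj, hC, -⟩, e⟩ := hM
  have hflat (n : ℤ) : Module.Flat R (C.X n) :=
    have := hproj n
    Module.Flat.of_projective
  exact ⟨C, isCompleteFlatResolution_of_exact h hflat hC, e⟩

theorem ResDimLE.mono {P Q : ∀ (N : Type u) [AddCommGroup N] [Module R N], Prop}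
    (hPQ : ∀ (N : Type u) [AddCommGroup N] [Module R N], P N → Q N) {m : ℕ}
    {M : Type u} [AddCommGroup M] [Module R M] (hM : ResDimLE R P m M) : ResDimLE R Q m M := by
  induction m generalizing M with
  | zero => exact hPQ M hM
  | succ m ih =>
    obtain ⟨G, _, _, f, hG, hf, hK⟩ := hM
    exact ⟨G, _, _, f, hPQ G hG, hf, ih hK⟩

theorem gorensteinFlatDim_le_gorensteinProjDim
    (h : ∀ (I : Type u) [AddCommGroup I] [Module R I], Module.Injective R I → flatDim R I ≠ ⊤)
    (M : Type u) [AddCommGroup M] [Module R M] :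
    gorensteinFlatDim R M ≤ gorensteinProjDim R M :=
  sInf_le_sInf fun _ ⟨m, hn, hm⟩ =>
    ⟨m, hn, ResDimLE.mono (fun _ _ _ => IsGorensteinProjective.isGorensteinFlat h) hm⟩

end

/-- If every injective module has finite flat dimension, then every Gorenstein projective
module is Gorenstein flat, and `Gfd_R M ≤ Gpd_R M` for every module `M`. -/
theorem stmt6 (R : Type u) [CommRing R]
    (h : ∀ (I : Type u) [AddCommGroup I] [Module R I], Module.Injective R I → flatDim R I ≠ ⊤) :
    (∀ (M : Type u) [AddCommGroup M] [Module R M],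
        IsGorensteinProjective R M → IsGorensteinFlat R M) ∧
    (∀ (M : Type u) [AddCommGroup M] [Module R M],
        gorensteinFlatDim R M ≤ gorensteinProjDim R M) :=
  ⟨fun _ _ _ => IsGorensteinProjective.isGorensteinFlat h, gorensteinFlatDim_le_gorensteinProjDim h⟩
end

section
/- Let L be an exact sequence of finitely generated free left R-modules. Then L is a complete resolution by finitely generated free modules (i.e., Hom_R(L, R) is exact) if and only if L is a complete projective resolution (i.e., Hom_R(L, Q) is exact for every projective left R-module Q). -/
open CategoryTheory

universe u

variable (R : Type u) [CommRing R]

/-!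
A map from a finitely generated module into a free module `ι →₀ R` lands in the functions
supported on a finite set `s`, a copy of `s → R`. So exactness of `Hom(L, R)` passes first to
finite products, then to free modules, and finally to their direct summands, the projective
modules.
-/

theorem LinearMap.exists_finite_range_le_supported {R : Type*} [Semiring R] {N M ι : Type*}
    [AddCommMonoid N] [Module R N] [Module.Finite R N] [AddCommMonoid M] [Module R M]
    (f : N →ₗ[R] ι →₀ M) : ∃ s : Set ι, s.Finite ∧ range f ≤ Finsupp.supported M R s := by
  obtain ⟨t, ht⟩ := Submodule.fg_range f
  refine ⟨⋃ x ∈ (t : Set (ι →₀ M)), x.support, ?_, ?_⟩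
  · exact t.finite_toSet.biUnion fun x _ => x.support.finite_toSet
  · rw [← ht]
    exact Finsupp.span_le_supported_biUnion_support (R := R) _

namespace ModuleComplex

variable {R : Type u} [CommRing R] {C : ModuleComplex R}

theorem HomExact.pi {ι : Type u} {M : ι → Type u} [∀ i, AddCommGroup (M i)]
    [∀ i, Module R (M i)] (h : ∀ i, C.HomExact (M i)) : C.HomExact (∀ i, M i) := by
  intro n f hf
  choose g hg using fun i => h i n (LinearMap.proj i ∘ₗ f) (by
    rw [LinearMap.comp_assoc, hf, LinearMap.comp_zero])
  refine ⟨LinearMap.pi g, ?_⟩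
  ext x i
  exact LinearMap.congr_fun (hg i) x

theorem HomExact.of_retract {M Q : Type u} [AddCommGroup M] [Module R M] [AddCommGroup Q]
    [Module R Q] (h : C.HomExact M) (s : Q →ₗ[R] M) (p : M →ₗ[R] Q) (hps : p ∘ₗ s = .id) :
    C.HomExact Q := by
  intro n f hf
  obtain ⟨g, hg⟩ := h n (s ∘ₗ f) (by rw [LinearMap.comp_assoc, hf, LinearMap.comp_zero])
  refine ⟨p ∘ₗ g, ?_⟩
  rw [LinearMap.comp_assoc, hg, ← LinearMap.comp_assoc, hps, LinearMap.id_comp]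

theorem HomExact.exists_comp_eq_of_range_le {M : Type u} [AddCommGroup M] [Module R M]
    {P : Submodule R M} (hP : C.HomExact P) {n : ℤ} (f : C.X (n + 1) →ₗ[R] M)
    (hf : f ∘ₗ C.d n = 0) (hfP : LinearMap.range f ≤ P) :
    ∃ g : C.X (n + 1 + 1) →ₗ[R] M, g ∘ₗ C.d (n + 1) = f := by
  let f' := f.codRestrict P fun x => hfP ⟨x, rfl⟩
  have hf' : f' ∘ₗ C.d n = 0 := by
    ext x
    exact LinearMap.congr_fun hf x
  obtain ⟨g', hg'⟩ := hP n f' hf'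
  refine ⟨P.subtype ∘ₗ g', ?_⟩
  rw [LinearMap.comp_assoc, hg']
  rfl

theorem HomExact.finsupp (hfin : ∀ n, Module.Finite R (C.X n)) (h : C.HomExact R)
    (ι : Type u) : C.HomExact (ι →₀ R) := by
  intro n f hf
  obtain ⟨s, hs, hfs⟩ := f.exists_finite_range_le_supported
  have : Finite s := hs.to_subtype
  let e : Finsupp.supported R R s ≃ₗ[R] (s → R) :=
    (Finsupp.supportedEquivFinsupp s).trans (Finsupp.linearEquivFunOnFinite R R s)
  have hsupp : C.HomExact (Finsupp.supported R R s) :=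
    (HomExact.pi fun _ => h).of_retract e.toLinearMap e.symm.toLinearMap e.symm_comp
  exact hsupp.exists_comp_eq_of_range_le f hf hfs

end ModuleComplex

theorem stmt9_general (R : Type u) [CommRing R] (L : ModuleComplex R)
    (hfree : ∀ n, Module.Free R (L.X n) ∧ Module.Finite R (L.X n)) :
    L.HomExact R ↔
      ∀ (Q : Type u) [AddCommGroup Q] [Module R Q], Module.Projective R Q →
        L.HomExact Q := by
  refine ⟨fun h Q _ _ hQ => ?_, fun h => h R inferInstance⟩
  obtain ⟨s, hs⟩ := Module.projective_def'.mp hQ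
  exact (h.finsupp (fun n => (hfree n).2) Q).of_retract s _ hs

/-- For an exact complex `L` of finitely generated free modules, `Hom(L, R)` is exact iff
`Hom(L, Q)` is exact for every projective module `Q`. -/
theorem stmt9 (R : Type u) [CommRing R] (L : ModuleComplex R)
    (hfree : ∀ n, Module.Free R (L.X n) ∧ Module.Finite R (L.X n)) (hexact : L.Exact) :
    L.HomExact R ↔
      ∀ (Q : Type u) [AddCommGroup Q] [Module R Q], Module.Projective R Q →
        L.HomExact Q :=
  stmt9_general R L hfree
end

section
/- Let L be an exact sequence of finitely generated free left R-modules. Then Hom_R(L, R) is exact if and only if I ⊗_R L is exact for every injective right R-module I (i.e., L is a complete flat resolution). -/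
open CategoryTheory

universe u

variable (R : Type u) [CommRing R]

/-!
For a finitely generated projective module `X` there is a natural isomorphism
`I ⊗ X ≅ Hom(X*, I)`, so `I ⊗ L` is the complex `Hom(L*, I)`. If `L*` is exact, `Hom(-, I)`
keeps it exact whenever `I` is injective. Conversely, the character module
`R⁺ = Hom_ℤ(R, ℚ/ℤ)` is injective, `Hom_R(L*, R⁺)` is the character dual of `L* ⊗ R ≅ L*`, and
character duals reflect exactness.
-/

section

open Function TensorProduct LinearMap

universe v

variable {R : Type*} [CommRing R] {A B C : Type*} [AddCommGroup A] [Module R A]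
  [AddCommGroup B] [Module R B] [AddCommGroup C] [Module R C]
  {f : A →ₗ[R] B} {g : B →ₗ[R] C}

lemma LinearMap.exact_lcomp_of_exact {I : Type v} [AddCommGroup I] [Module R I] [Small.{v} R]
    [Module.Injective R I] (h : Exact f g) : Exact (lcomp R I g) (lcomp R I f) := by
  have hsurj : Surjective (lcomp R I (range g).subtype) := fun φ =>
    Module.Injective.extension_property R I _ _ _ (Submodule.injective_subtype _) φ
  have hg : lcomp R I g = lcomp R I g.rangeRestrict ∘ₗ lcomp R I (range g).subtype := rfl
  rw [hg, hsurj.comp_exact_iff_exact]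
  refine exact_lcomp_of_exact_of_surjective I ?_ g.surjective_rangeRestrict
  rwa [← (range g).injective_subtype.comp_exact_iff_exact]

namespace CharacterModule

lemma exact_of_exact_dual (h : Exact (dual g) (dual f)) : Exact f g := by
  refine LinearMap.exact_iff.mpr (le_antisymm (fun b hb => ?_) ?_)
  · rw [← Submodule.Quotient.mk_eq_zero]
    refine eq_zero_of_character_apply fun c => ?_
    obtain ⟨ψ, hψ⟩ := (h (dual (range f).mkQ c)).mp <| by
      rw [← LinearMap.comp_apply, ← dual_comp, range_mkQ_comp, dual_zero, LinearMap.zero_apply]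
    calc c (Submodule.Quotient.mk b) = ψ (g b) := (DFunLike.congr_fun hψ b).symm
      _ = 0 := by rw [LinearMap.mem_ker.mp hb, map_zero]
  · rintro _ ⟨a, rfl⟩
    refine eq_zero_of_character_apply fun c => ?_
    exact congr($(h.apply_apply_eq_zero c) a)

lemma exact_rTensor_of_exact_lcomp (D : Type*) [AddCommGroup D] [Module R D]
    (h : Exact (lcomp R (CharacterModule D) g) (lcomp R (CharacterModule D) f)) :
    Exact (f.rTensor D) (g.rTensor D) := by
  refine exact_of_exact_dual ((Exact.iff_of_ladder_linearEquiv (e₁ := homEquiv) (e₂ := homEquiv)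
    (e₃ := homEquiv) ?_ ?_).mpr h)
  · rw [← dual_rTensor_conj_homEquiv]; ext; simp
  · rw [← dual_rTensor_conj_homEquiv]; ext; simp

lemma exact_of_exact_lcomp
    (h : Exact (lcomp R (CharacterModule R) g) (lcomp R (CharacterModule R) f)) : Exact f g :=
  Module.FaithfullyFlat.rTensor_reflects_exact R R f g (exact_rTensor_of_exact_lcomp R h)

end CharacterModule

section TensorHomDuality

variable (I : Type*) [AddCommGroup I] [Module R I]
variable {X Y Z : Type*} [AddCommGroup X] [Module R X] [Module.Finite R X] [Module.Projective R X]
  [AddCommGroup Y] [Module R Y] [Module.Finite R Y] [Module.Projective R Y]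
  [AddCommGroup Z] [Module R Z] [Module.Finite R Z] [Module.Projective R Z]

variable (R X) in
noncomputable def tensorEquivHomDual : I ⊗[R] X ≃ₗ[R] (Module.Dual R X →ₗ[R] I) :=
  TensorProduct.comm R I X ≪≫ₗ TensorProduct.congr (Module.evalEquiv R X) (.refl R I) ≪≫ₗ
    dualTensorHomEquiv R (Module.Dual R X) I

@[simp]
lemma tensorEquivHomDual_tmul (i : I) (x : X) (φ : Module.Dual R X) :
    tensorEquivHomDual R I X (i ⊗ₜ x) φ = φ x • i := by
  simp [tensorEquivHomDual, dualTensorHomEquiv]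

lemma lcomp_dualMap_comp_tensorEquivHomDual (d : X →ₗ[R] Y) :
    lcomp R I d.dualMap ∘ₗ tensorEquivHomDual R I X = tensorEquivHomDual R I Y ∘ₗ d.lTensor I := by
  ext; simp

lemma exact_lTensor_iff_exact_lcomp_dualMap {f : X →ₗ[R] Y} {g : Y →ₗ[R] Z} :
    Exact (f.lTensor I) (g.lTensor I) ↔ Exact (lcomp R I f.dualMap) (lcomp R I g.dualMap) :=
  (Exact.iff_of_ladder_linearEquiv (lcomp_dualMap_comp_tensorEquivHomDual I f)
    (lcomp_dualMap_comp_tensorEquivHomDual I g)).symm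

end TensorHomDuality

end

namespace ModuleComplex

open LinearMap

variable {R} (L : ModuleComplex R)

lemma homExact_self_iff :
    L.HomExact R ↔ ∀ n, Function.Exact (L.d (n + 1)).dualMap (L.d n).dualMap := by
  refine ⟨fun h n φ => ⟨fun hφ => h n φ hφ, ?_⟩, fun h n φ hφ => (h n φ).mp hφ⟩
  rintro ⟨ψ, rfl⟩
  rw [dualMap_apply', dualMap_apply', LinearMap.comp_assoc, L.comp_eq_zero, comp_zero]

lemma tensorExact_iff (I : Type u) [AddCommGroup I] [Module R I] :
    L.TensorExact I ↔ ∀ n, Function.Exact ((L.d n).lTensor I) ((L.d (n + 1)).lTensor I) :=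
  forall_congr' fun _ => LinearMap.exact_iff.trans eq_comm |>.symm

end ModuleComplex

theorem stmt10_general (R : Type u) [CommRing R] (L : ModuleComplex R)
    (hfree : ∀ n, Module.Free R (L.X n) ∧ Module.Finite R (L.X n)) :
    L.HomExact R ↔
      ∀ (I : Type u) [AddCommGroup I] [Module R I], Module.Injective R I →
        L.TensorExact I := by
  have _ (n : ℤ) : Module.Free R (L.X n) := (hfree n).1
  have _ (n : ℤ) : Module.Finite R (L.X n) := (hfree n).2
  rw [L.homExact_self_iff]
  refine ⟨fun h I _ _ _ => (L.tensorExact_iff I).mpr fun n => ?_, fun h n => ?_⟩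
  · exact (exact_lTensor_iff_exact_lcomp_dualMap I).mpr (LinearMap.exact_lcomp_of_exact (h n))
  · have : Module.Injective R (CharacterModule R) :=
      Module.Flat.iff_characterModule_injective.mp inferInstance
    refine CharacterModule.exact_of_exact_lcomp ((exact_lTensor_iff_exact_lcomp_dualMap _).mp ?_)
    exact (L.tensorExact_iff _).mp (h _ this) n

/-- For an exact complex `L` of finitely generated free modules, `Hom(L, R)` is exact iff
`I ⊗ L` is exact for every injective module `I`. -/
theorem stmt10 (R : Type u) [CommRing R] (L : ModuleComplex R)
    (hfree : ∀ n, Module.Free R (L.X n) ∧ Module.Finite R (L.X n)) (hexact : L.Exact) :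
    L.HomExact R ↔
      ∀ (I : Type u) [AddCommGroup I] [Module R I], Module.Injective R I →
        L.TensorExact I :=
  stmt10_general R L hfree
end

section
/- Let N be an infinitely presented left R-module with Ext^n_R(N, R) = 0 for all n > 0. Then Ext^1_R(N, F) = 0 for every flat left R-module F. -/
open CategoryTheory

universe u

variable (R : Type u) [CommRing R]

/-!
With the given resolution `F₂ → F₁ → F₀ → N`, `Ext¹(N, Y) = 0` says that every map `F₁ → Y`
vanishing on `ker (F₁ → F₀)` extends along `F₁ → F₀`, i.e. every map from the finitely presented
module `F₁ ⧸ ker (F₁ → F₀)` to `Y` extends to `F₀`. For `Y` flat, such a map factors through a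
finite free module `Rᵏ` (Lazard), and maps to `Rᵏ` extend coordinatewise because `Ext¹(N, R) = 0`.
-/

namespace LinearMap

variable {R} {Q P : Type*} [AddCommGroup Q] [Module R Q] [AddCommGroup P] [Module R P]
  {i : Q →ₗ[R] P}

theorem surjective_comp_right_finsupp (h : Function.Surjective fun g : P →ₗ[R] R => g ∘ₗ i)
    (κ : Type*) [Finite κ] : Function.Surjective fun g : P →ₗ[R] (κ →₀ R) => g ∘ₗ i := by
  intro φ
  choose g hg using fun a : κ => h (Finsupp.lapply a ∘ₗ φ)
  refine ⟨(Finsupp.linearEquivFunOnFinite R R κ).symm.toLinearMap ∘ₗ LinearMap.pi g, ?_⟩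
  ext x a
  exact LinearMap.congr_fun (hg a) x

theorem surjective_comp_right_of_flat [Module.FinitePresentation R Q]
    (h : Function.Surjective fun g : P →ₗ[R] R => g ∘ₗ i)
    (M : Type*) [AddCommGroup M] [Module R M] [Module.Flat R M] :
    Function.Surjective fun g : P →ₗ[R] M => g ∘ₗ i := by
  intro φ
  obtain ⟨k, φ₁, φ₂, rfl⟩ := Module.Flat.exists_factorization_of_finitePresentation φ
  obtain ⟨g, hg⟩ := surjective_comp_right_finsupp h (Fin k) φ₁
  exact ⟨φ₂ ∘ₗ g, by simp only [comp_assoc, hg]⟩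

theorem exists_comp_eq_of_flat {P₀ P₁ : Type*} [AddCommGroup P₀] [Module R P₀]
    [AddCommGroup P₁] [Module R P₁] [Module.FinitePresentation R P₁] (d : P₁ →ₗ[R] P₀)
    (hK : (ker d).FG) (hR : ∀ f : P₁ →ₗ[R] R, ker d ≤ ker f → ∃ g : P₀ →ₗ[R] R, g ∘ₗ d = f)
    (M : Type*) [AddCommGroup M] [Module R M] [Module.Flat R M]
    (f : P₁ →ₗ[R] M) (hf : ker d ≤ ker f) : ∃ g : P₀ →ₗ[R] M, g ∘ₗ d = f := by
  have : Module.FinitePresentation R (P₁ ⧸ ker d) :=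
    Module.finitePresentation_of_surjective _ (ker d).mkQ_surjective (by rwa [Submodule.ker_mkQ])
  have hRi : Function.Surjective fun g : P₀ →ₗ[R] R => g ∘ₗ (ker d).liftQ d le_rfl := by
    intro ψ
    obtain ⟨g, hg⟩ := hR (ψ ∘ₗ (ker d).mkQ) fun x hx => by
      simp [(Submodule.Quotient.mk_eq_zero _).2 hx]
    exact ⟨g, Submodule.linearMap_qext _ hg⟩
  obtain ⟨g, hg⟩ := surjective_comp_right_of_flat hRi M ((ker d).liftQ f hf)
  exact ⟨g, by rw [← (ker d).liftQ_mkQ f hf, ← hg]; rfl⟩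

end LinearMap

namespace ModuleCat

variable {R} {N : Type u} [AddCommGroup N] [Module R N]
  (F : ℕ → ModuleCat.{u} R) (d : ∀ n, F (n + 1) →ₗ[R] F n) (ε : F 0 →ₗ[R] N)
  (hε : Function.Surjective ε) (h₀ : LinearMap.ker ε = LinearMap.range (d 0))
  (hd : ∀ n, LinearMap.ker (d n) = LinearMap.range (d (n + 1)))

noncomputable def chainComplexOfExact : ChainComplex (ModuleCat.{u} R) ℕ :=
  ChainComplex.of F (fun n => ofHom (d n)) fun n => by
    ext x
    exact LinearMap.congr_fun (LinearMap.range_le_ker_iff.1 (hd n).ge) x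

lemma chainComplexOfExact_d (n : ℕ) :
    (chainComplexOfExact F d hd).d (n + 1) n = ofHom (d n) :=
  ChainComplex.of_d F (fun n => ofHom (d n)) n

include hε h₀ in
noncomputable def projectiveResolutionOfExact [∀ n, Module.Projective R (F n)] :
    ProjectiveResolution (of R N) where
  complex := chainComplexOfExact F d hd
  projective n := (F n).projective_of_categoryTheory_projective
  π := (ChainComplex.toSingle₀Equiv _ _).symm ⟨ofHom ε, by
    rw [chainComplexOfExact_d]
    ext x
    exact LinearMap.congr_fun (LinearMap.range_le_ker_iff.1 h₀.ge) x⟩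
  quasiIso := ⟨fun n => by
    cases n with
    | zero =>
      rw [ChainComplex.quasiIsoAt₀_iff, ShortComplex.quasiIso_iff_of_zeros' _ rfl rfl rfl]
      refine ⟨?_, (epi_iff_surjective _).2 hε⟩
      rw [ShortComplex.moduleCat_exact_iff_range_eq_ker]
      exact h₀.symm
    | succ n =>
      rw [quasiIsoAt_iff_exactAt' (hL := ChainComplex.exactAt_succ_single_obj ..),
        HomologicalComplex.exactAt_iff' _ (n + 2) (n + 1) n (by simp) (by simp),
        ShortComplex.moduleCat_exact_iff_range_eq_ker]
      simp only [HomologicalComplex.sc', HomologicalComplex.shortComplexFunctor',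
        chainComplexOfExact_d]
      exact (hd n).symm⟩

include hε h₀ hd in
theorem subsingleton_extMod_one_iff [∀ n, Module.Projective R (F n)]
    (Y : Type u) [AddCommGroup Y] [Module R Y] :
    Subsingleton (ExtMod R 1 N Y) ↔ ∀ f : F 1 →ₗ[R] Y,
      LinearMap.ker (d 0) ≤ LinearMap.ker f → ∃ g : F 0 →ₗ[R] Y, g ∘ₗ d 0 = f := by
  let P := projectiveResolutionOfExact F d ε hε h₀ hd
  rw [← isZero_iff_subsingleton, ExtMod, Iso.isZero_iff (P.isoExt 1 (of R Y)),
    ← HomologicalComplex.exactAt_iff_isZero_homology,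
    HomologicalComplex.exactAt_iff' _ 0 1 2 (by simp) (by simp),
    ShortComplex.moduleCat_exact_iff, hd 0]
  simp only [LinearMap.range_le_ker_iff]
  refine homEquiv.forall_congr fun f => ?_
  refine ⟨fun h hf => ?_, fun h hf => ?_⟩
  · obtain ⟨g, hg⟩ := h (hom_ext hf)
    exact ⟨g.hom, congrArg Hom.hom hg⟩
  · obtain ⟨g, hg⟩ := h (congrArg Hom.hom hf)
    exact ⟨ofHom g, hom_ext hg⟩

end ModuleCat

/-- If `N` is infinitely presented and `Ext^n(N, R) = 0` for all `n > 0`, then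
`Ext^1(N, F) = 0` for every flat module `F`. -/
theorem stmt12 (R : Type u) [CommRing R] (N : Type u) [AddCommGroup N] [Module R N]
    (hN : InfinitelyPresented R N)
    (h : ∀ n : ℕ, 0 < n → Subsingleton (ExtMod R n N R)) :
    ∀ (F : Type u) [AddCommGroup F] [Module R F], Module.Flat R F →
      Subsingleton (ExtMod R 1 N F) := by
  intro M _ _ _
  obtain ⟨F, d, ε, hfree, hε, h₀, hd⟩ := hN
  have (n : ℕ) : Module.Projective R (F n) := by have := (hfree n).1; infer_instance
  have (n : ℕ) : Module.Finite R (F n) := (hfree n).2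
  have hK : (LinearMap.ker (d 0)).FG := hd 0 ▸ Submodule.fg_range (d 1)
  have hR := (ModuleCat.subsingleton_extMod_one_iff F d ε hε h₀ hd R).1 (h 1 one_pos)
  have : Module.FinitePresentation R (F 1) := Module.finitePresentation_of_projective _ _
  exact (ModuleCat.subsingleton_extMod_one_iff F d ε hε h₀ hd M).2
    (LinearMap.exists_comp_eq_of_flat (d 0) hK hR M)
end
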